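/- arXiv:2211.00953 — 6 statements merged into one kernel-verified Lean document; each statement's English description precedes it below -/
import Mathlib

section
/- Let A be an N×N real symmetric positive definite matrix with eigenvalues λ₁,…,λ_N, b ∈ ℝ^N, x = A⁻¹b, x₀ ∈ ℝ^N with x₀ ≠ x, and r₀ = b − Ax₀. Then for every k, the minimum over z ∈ x₀ + K_k(A,r₀) of ‖x − z‖_A divided by ‖x − x₀‖_A is at most min over p ∈ P_k(0) of max over 1 ≤ i ≤ N of |p(λ_i)|. -/
open Matrix Polynomial

/-- The `A`-norm `‖v‖_A = (vᵀ A v)^{1/2}`. -/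
noncomputable def Anorm {N : ℕ} (A : Matrix (Fin N) (Fin N) ℝ) (v : Fin N → ℝ) : ℝ :=
  Real.sqrt (v ⬝ᵥ A *ᵥ v)

/-- The `k`-th Krylov subspace `K_k(A, r) = span {r, Ar, …, A^{k-1} r}`. -/
def krylov {N : ℕ} (A : Matrix (Fin N) (Fin N) ℝ) (r : Fin N → ℝ) (k : ℕ) :
    Submodule ℝ (Fin N → ℝ) :=
  Submodule.span ℝ {v | ∃ i < k, v = (A ^ i) *ᵥ r}

/-!
If `r₀ = A (x - x₀)`, then every `z ∈ x₀ + K_k(A, r₀)` has error `x - z = p(A) (x - x₀)` with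
`p = 1 + X q`, `deg q < k`, and every `p ∈ P_k(0)` arises in this way (take `q = p.divX`).
Writing `A = Q diag(λ) Qᵀ` and `w = Qᵀ (x - x₀)`, one has `‖p(A) (x - x₀)‖_A² = ∑ λᵢ p(λᵢ)² wᵢ²`,
which is at most `maxᵢ p(λᵢ)² · ∑ λᵢ wᵢ² = maxᵢ p(λᵢ)² · ‖x - x₀‖_A²`.
-/

namespace Matrix

variable {n R : Type*} [Fintype n] [DecidableEq n] [CommRing R]

theorem aeval_diagonal (d : n → R) (p : R[X]) :
    aeval (diagonal d) p = diagonal fun i => p.eval (d i) := by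
  simpa [aeval_pi_apply] using aeval_algHom_apply (diagonalAlgHom R) d p

theorem aeval_conj_diagonal {Q : Matrix n n R} (hQ : Qᵀ * Q = 1) (d : n → R) (p : R[X]) :
    aeval (Q * diagonal d * Qᵀ) p = Q * diagonal (fun i => p.eval (d i)) * Qᵀ := by
  let u : (Matrix n n R)ˣ := ⟨Q, Qᵀ, mul_eq_one_comm.mp hQ, hQ⟩
  simpa [ConjAct.units_smul_def, u, aeval_diagonal] using
    aeval_algHom_apply (MulSemiringAction.toAlgEquiv R _ (ConjAct.toConjAct u)) (diagonal d) p

theorem isUnit_det_conj_diagonal {Q : Matrix n n R} (hQ : Qᵀ * Q = 1) {d : n → R}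
    (hd : ∀ i, IsUnit (d i)) : IsUnit (Q * diagonal d * Qᵀ).det := by
  rw [det_mul, det_mul, mul_right_comm, ← det_mul, mul_eq_one_comm.mp hQ, det_one, one_mul,
    det_diagonal]
  exact IsUnit.prod_univ_iff.mpr hd

theorem transpose_mulVec_conj_diagonal_mulVec {Q : Matrix n n R} (hQ : Qᵀ * Q = 1) (d : n → R)
    (v : n → R) : Qᵀ *ᵥ ((Q * diagonal d * Qᵀ) *ᵥ v) = fun i => d i * (Qᵀ *ᵥ v) i := by
  rw [mulVec_mulVec, ← Matrix.mul_assoc, ← Matrix.mul_assoc, hQ, Matrix.one_mul,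
    ← mulVec_mulVec]
  exact funext (mulVec_diagonal d _)

end Matrix

theorem aeval_mulVec_mem_krylov {N : ℕ} (A : Matrix (Fin N) (Fin N) ℝ) (r : Fin N → ℝ) {k : ℕ}
    {q : ℝ[X]} (hq : q.degree < k) : aeval A q *ᵥ r ∈ krylov A r k := by
  rw [aeval_eq_sum_range, sum_mulVec]
  refine Submodule.sum_mem _ fun i _ => ?_
  rw [smul_mulVec]
  by_cases hi : i < k
  · exact Submodule.smul_mem _ _ (Submodule.subset_span ⟨i, hi, rfl⟩)
  · rw [coeff_eq_zero_of_degree_lt (hq.trans_le (by exact_mod_cast not_lt.mp hi)), zero_smul]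
    exact Submodule.zero_mem _

theorem exists_mem_krylov_sub_eq_aeval {N : ℕ} (A : Matrix (Fin N) (Fin N) ℝ) (e : Fin N → ℝ)
    {k : ℕ} {p : ℝ[X]} (hdeg : p.natDegree ≤ k) (hp0 : p.eval 0 = 1) :
    ∃ v ∈ krylov A (A *ᵥ e) k, e - v = aeval A p *ᵥ e := by
  have hdivX : p.divX.degree < k := by
    rcases eq_or_ne p 0 with rfl | hp
    · simp
    · exact (degree_divX_lt hp).trans_le (degree_le_of_natDegree_le hdeg)
  have hp : p = p.divX * X + 1 := by
    rw [mul_comm, ← C_1, ← hp0, ← coeff_zero_eq_eval_zero, X_mul_divX_add]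
  refine ⟨-(aeval A p.divX *ᵥ (A *ᵥ e)),
    Submodule.neg_mem _ (aeval_mulVec_mem_krylov A _ hdivX), ?_⟩
  conv_rhs => rw [hp]
  simp [add_mulVec, mulVec_mulVec, add_comm]

theorem Anorm_conj_diagonal {N : ℕ} (Q : Matrix (Fin N) (Fin N) ℝ) (d v : Fin N → ℝ) :
    Anorm (Q * diagonal d * Qᵀ) v = √(∑ i, d i * (Qᵀ *ᵥ v) i ^ 2) := by
  rw [Anorm, ← mulVec_mulVec, ← mulVec_mulVec, dotProduct_mulVec, ← mulVec_transpose]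
  simp only [dotProduct, mulVec_diagonal]
  congr 1
  exact Finset.sum_congr rfl fun i _ => by ring

theorem Anorm_aeval_mulVec_le {N : ℕ} {Q : Matrix (Fin N) (Fin N) ℝ} (hQ : Qᵀ * Q = 1)
    {lam : Fin N → ℝ} (hlam : ∀ i, 0 ≤ lam i) {p : ℝ[X]} {M : ℝ} (hM0 : 0 ≤ M)
    (hM : ∀ i, |p.eval (lam i)| ≤ M) (e : Fin N → ℝ) :
    Anorm (Q * diagonal lam * Qᵀ) (aeval (Q * diagonal lam * Qᵀ) p *ᵥ e) ≤
      M * Anorm (Q * diagonal lam * Qᵀ) e := by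
  rw [Anorm_conj_diagonal, Anorm_conj_diagonal, aeval_conj_diagonal hQ,
    transpose_mulVec_conj_diagonal_mulVec hQ, ← Real.sqrt_sq hM0, ← Real.sqrt_mul (sq_nonneg M),
    Finset.mul_sum]
  refine Real.sqrt_le_sqrt (Finset.sum_le_sum fun i _ => ?_)
  have hpM : p.eval (lam i) ^ 2 ≤ M ^ 2 := sq_le_sq' (abs_le.mp (hM i)).1 (abs_le.mp (hM i)).2
  calc lam i * (p.eval (lam i) * (Qᵀ *ᵥ e) i) ^ 2
      = p.eval (lam i) ^ 2 * (lam i * (Qᵀ *ᵥ e) i ^ 2) := by ring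
    _ ≤ M ^ 2 * (lam i * (Qᵀ *ᵥ e) i ^ 2) := by gcongr; exact mul_nonneg (hlam i) (sq_nonneg _)

theorem stmt_3_general {N : ℕ} (A Q : Matrix (Fin N) (Fin N) ℝ) (lam : Fin N → ℝ)
    (hlam : ∀ i, 0 < lam i) (hQ : Qᵀ * Q = 1)
    (hAQ : A = Q * Matrix.diagonal lam * Qᵀ)
    (b x₀ x : Fin N → ℝ) (hx : x = A⁻¹ *ᵥ b)
    (r₀ : Fin N → ℝ) (hr₀ : r₀ = b - A *ᵥ x₀) (k : ℕ) :
    sInf {t | ∃ z : Fin N → ℝ, (∃ v ∈ krylov A r₀ k, z = x₀ + v) ∧ t = Anorm A (x - z)} /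
        Anorm A (x - x₀) ≤
      sInf {t | ∃ p : Polynomial ℝ, p.natDegree ≤ k ∧ p.eval 0 = 1 ∧
        t = ⨆ i, |p.eval (lam i)|} := by
  have hA : IsUnit A.det := hAQ ▸ isUnit_det_conj_diagonal hQ fun i => (hlam i).ne'.isUnit
  have hr : r₀ = A *ᵥ (x - x₀) := by
    rw [hr₀, mulVec_sub, hx, mulVec_mulVec, mul_nonsing_inv _ hA, one_mulVec]
  refine le_csInf ⟨_, 1, by simp, by simp, rfl⟩ ?_
  rintro _ ⟨p, hdeg, hp0, rfl⟩
  obtain ⟨v, hv, hev⟩ := exists_mem_krylov_sub_eq_aeval A (x - x₀) hdeg hp0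
  refine div_le_of_le_mul₀ (Real.sqrt_nonneg _) (Real.iSup_nonneg fun _ => abs_nonneg _) ?_
  calc sInf {t | ∃ z : Fin N → ℝ, (∃ v ∈ krylov A r₀ k, z = x₀ + v) ∧ t = Anorm A (x - z)}
      ≤ Anorm A (x - (x₀ + v)) := by
        refine csInf_le ⟨0, ?_⟩ ⟨x₀ + v, ⟨v, hr ▸ hv, rfl⟩, rfl⟩
        rintro _ ⟨z, -, rfl⟩
        exact Real.sqrt_nonneg _
    _ = Anorm A (aeval A p *ᵥ (x - x₀)) := by rw [← hev, sub_add_eq_sub_sub]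
    _ ≤ (⨆ i, |p.eval (lam i)|) * Anorm A (x - x₀) := by
        subst hAQ
        exact Anorm_aeval_mulVec_le hQ (fun i => (hlam i).le)
          (Real.iSup_nonneg fun _ => abs_nonneg _)
          (le_ciSup (Set.finite_range _).bddAbove) _

theorem stmt_3 {N : ℕ} (A Q : Matrix (Fin N) (Fin N) ℝ) (lam : Fin N → ℝ)
    (hlam : ∀ i, 0 < lam i) (hQ : Qᵀ * Q = 1)
    (hAQ : A = Q * Matrix.diagonal lam * Qᵀ)
    (b x₀ x : Fin N → ℝ) (hx : x = A⁻¹ *ᵥ b) (hx₀ : x₀ ≠ x)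
    (r₀ : Fin N → ℝ) (hr₀ : r₀ = b - A *ᵥ x₀) (k : ℕ) :
    sInf {t | ∃ z : Fin N → ℝ, (∃ v ∈ krylov A r₀ k, z = x₀ + v) ∧ t = Anorm A (x - z)} /
        Anorm A (x - x₀) ≤
      sInf {t | ∃ p : Polynomial ℝ, p.natDegree ≤ k ∧ p.eval 0 = 1 ∧
        t = ⨆ i, |p.eval (lam i)|} :=
  stmt_3_general A Q lam hlam hQ hAQ b x₀ x hx r₀ hr₀ k
end

section
/- Let A be an N×N real symmetric positive definite matrix with eigenvalues λ₁,…,λ_N and let d(A) be the degree of the minimal polynomial of A. Then for every k = 1,…,d(A)−1 there exist k+1 distinct eigenvalues λ̂₁,…,λ̂_{k+1} of A such that min over p ∈ P_k(0) of max over 1 ≤ j ≤ N of |p(λ_j)| equals ( Σ_{i=1}^{k+1} Π_{j≠i} |λ̂_j| / |λ̂_j − λ̂_i| )^{−1}. -/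
/-!
For a set `T` of `k + 1` positive nodes, Lagrange interpolation at `0` gives
`p 0 = ∑ x ∈ T, σ_T(x) p(x) w_T(x)` for every `p` of degree `≤ k`, with
`w_T(x) = ∏ |y| / |y - x|` and signs `σ_T(x) = ±1` alternating along the sorted nodes.
Hence `max_T |p| ≥ 1 / ∑ w_T` when `p 0 = 1`, with equality for the interpolant of the
alternating values `σ_T / ∑ w_T`. Choosing `T` among the eigenvalues with `∑ w_T` minimal,
this interpolant is bounded by `1 / ∑ w_T` on the whole spectrum: otherwise, exchanging a
suitable neighbour of an offending eigenvalue `μ` for `μ` keeps the values alternating and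
strictly decreases `∑ w` (de la Vallée Poussin's exchange). There are at least `d(A)`
distinct eigenvalues, so such `T` exist for `k < d(A)`.
-/

open Matrix Polynomial Finset

noncomputable section

def stepSign (y x : ℝ) : ℝ := if y < x then -1 else 1

-- `altSign T x = (-1) ^ #{y ∈ T | y < x}`, alternating along the sorted nodes.
def altSign (T : Finset ℝ) (x : ℝ) : ℝ := ∏ y ∈ T, stepSign y x

def nodeWeight (T : Finset ℝ) (x : ℝ) : ℝ := ∏ y ∈ T.erase x, |y| / |y - x|

def weightSum (T : Finset ℝ) : ℝ := ∑ x ∈ T, nodeWeight T x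

end

variable {T : Finset ℝ} {p : ℝ[X]} {x y μ r E ε : ℝ}

theorem abs_stepSign : |stepSign y x| = 1 := by
  unfold stepSign; split_ifs <;> norm_num

theorem stepSign_mul_self : stepSign y x * stepSign y x = 1 := by
  unfold stepSign; split_ifs <;> norm_num

theorem stepSign_self : stepSign x x = 1 := by simp [stepSign]

theorem abs_altSign : |altSign T x| = 1 := by
  rw [altSign, abs_prod]; exact prod_eq_one fun _ _ => abs_stepSign

theorem altSign_mul_self : altSign T x * altSign T x = 1 := by
  rw [altSign, ← prod_mul_distrib]; exact prod_eq_one fun _ _ => stepSign_mul_self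

theorem altSign_insert_erase (hr : r ∈ T) (hμ : μ ∉ T) (x : ℝ) :
    altSign (insert μ (T.erase r)) x = altSign T x * stepSign μ x * stepSign r x := by
  rw [altSign, prod_insert fun h => hμ (mem_of_mem_erase h), altSign, ← mul_prod_erase T _ hr]
  linear_combination
    (-stepSign μ x * ∏ y ∈ T.erase r, stepSign y x) * stepSign_mul_self (y := r) (x := x)

theorem nodeWeight_pos (hT : ∀ y ∈ T, 0 < y) : 0 < nodeWeight T x :=
  prod_pos fun y hy => by
    have := hT y (mem_of_mem_erase hy)
    have : y - x ≠ 0 := sub_ne_zero.mpr (ne_of_mem_erase hy)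
    positivity

theorem weightSum_pos (hT : ∀ y ∈ T, 0 < y) (hne : T.Nonempty) : 0 < weightSum T :=
  sum_pos (fun _ _ => nodeWeight_pos hT) hne

theorem eval_zero_basis (hT : ∀ y ∈ T, 0 < y) :
    (Lagrange.basis T id x).eval 0 = altSign T x * nodeWeight T x := by
  rw [Lagrange.basis, eval_prod, nodeWeight, altSign,
    ← prod_erase T (f := fun y => stepSign y x) stepSign_self, ← prod_mul_distrib]
  refine prod_congr rfl fun y hy => ?_
  have hy0 := hT y (mem_of_mem_erase hy)
  have hyx : y - x ≠ 0 := sub_ne_zero.mpr (ne_of_mem_erase hy)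
  have hxy : x - y ≠ 0 := sub_ne_zero.mpr (ne_of_mem_erase hy).symm
  simp only [Lagrange.basisDivisor, eval_mul, eval_C, eval_sub, eval_X, id, stepSign,
    abs_of_pos hy0]
  split_ifs with h
  · rw [abs_of_neg (by linarith)]; field_simp; ring
  · rw [abs_of_pos (by linarith [lt_of_le_of_ne (not_lt.mp h) (ne_of_mem_erase hy).symm])]
    field_simp; ring

theorem eval_zero_eq_sum (hT : ∀ y ∈ T, 0 < y) (hdeg : p.degree < #T) :
    p.eval 0 = ∑ x ∈ T, altSign T x * p.eval x * nodeWeight T x := by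
  conv_lhs => rw [Lagrange.eq_interpolate (s := T) Function.injective_id.injOn hdeg]
  rw [Lagrange.interpolate_apply, eval_finsetSum]
  refine sum_congr rfl fun x _ => ?_
  rw [eval_mul, eval_C, eval_zero_basis hT, id]
  ring

theorem abs_eval_zero_le_mul_weightSum (hT : ∀ y ∈ T, 0 < y) (hdeg : p.degree < #T)
    (hM : ∀ x ∈ T, |p.eval x| ≤ E) : |p.eval 0| ≤ E * weightSum T := by
  rw [eval_zero_eq_sum hT hdeg, weightSum, mul_sum]
  refine (abs_sum_le_sum_abs _ _).trans (sum_le_sum fun x hx => ?_)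
  rw [abs_mul, abs_mul, abs_altSign, one_mul, abs_of_pos (nodeWeight_pos hT)]
  exact mul_le_mul_of_nonneg_right (hM x hx) (nodeWeight_pos hT).le

theorem mul_weightSum_lt (hT : ∀ y ∈ T, 0 < y) (hdeg : p.degree < #T)
    (hle : ∀ x ∈ T, E ≤ ε * (altSign T x * p.eval x))
    (hlt : ∃ x ∈ T, E < ε * (altSign T x * p.eval x)) : E * weightSum T < ε * p.eval 0 := by
  rw [eval_zero_eq_sum hT hdeg, weightSum, mul_sum, mul_sum]
  obtain ⟨x₀, hx₀, hlt⟩ := hlt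
  refine sum_lt_sum (fun x hx => ?_) ⟨x₀, hx₀, ?_⟩
  · linarith [mul_le_mul_of_nonneg_right (hle x hx) (nodeWeight_pos (x := x) hT).le]
  · linarith [mul_lt_mul_of_pos_right hlt (nodeWeight_pos (x := x₀) hT)]

-- `r` is the nearest node above `μ`, or the least node if there is none.
theorem exists_stepSign_mul_stepSign_eq (hne : T.Nonempty) (hμ : μ ∉ T) :
    ∃ r ∈ T, ∀ x ∈ T.erase r, stepSign r x * stepSign μ x = stepSign r μ := by
  by_cases habove : (T.filter (μ < ·)).Nonempty
  · obtain ⟨hrT, hμr⟩ := mem_filter.mp (min'_mem _ habove)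
    refine ⟨_, hrT, fun x hx => ?_⟩
    have hiff : (T.filter (μ < ·)).min' habove < x ↔ μ < x :=
      ⟨hμr.trans, fun h => lt_of_le_of_ne
        (min'_le _ x (mem_filter.mpr ⟨mem_of_mem_erase hx, h⟩)) (ne_of_mem_erase hx).symm⟩
    simp only [stepSign, hiff, hμr.not_gt, if_false]
    split_ifs <;> norm_num
  · have hbelow : ∀ x ∈ T, x < μ := fun x hx => lt_of_not_ge fun h =>
      habove ⟨x, mem_filter.mpr ⟨hx, lt_of_le_of_ne h fun h' => hμ (h' ▸ hx)⟩⟩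
    refine ⟨T.min' hne, min'_mem T hne, fun x hx => ?_⟩
    have hlt : T.min' hne < x :=
      lt_of_le_of_ne (min'_le T x (mem_of_mem_erase hx)) (ne_of_mem_erase hx).symm
    simp [stepSign, hlt, (hbelow x (mem_of_mem_erase hx)).not_gt, hbelow _ (min'_mem T hne)]

-- `r` is the nearest node below `μ`, or the greatest node if there is none.
theorem exists_stepSign_mul_stepSign_eq_neg (hne : T.Nonempty) (hμ : μ ∉ T) :
    ∃ r ∈ T, ∀ x ∈ T.erase r, stepSign r x * stepSign μ x = -stepSign r μ := by
  by_cases hbelow : (T.filter (· < μ)).Nonempty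
  · obtain ⟨hrT, hrμ⟩ := mem_filter.mp (max'_mem _ hbelow)
    refine ⟨_, hrT, fun x hx => ?_⟩
    have hiff : (T.filter (· < μ)).max' hbelow < x ↔ μ < x := by
      refine ⟨fun h => lt_of_not_ge fun h' => ?_, hrμ.trans⟩
      have hxμ : x < μ := lt_of_le_of_ne h' fun h'' => hμ (h'' ▸ mem_of_mem_erase hx)
      exact h.not_ge (le_max' _ x (mem_filter.mpr ⟨mem_of_mem_erase hx, hxμ⟩))
    simp only [stepSign, hiff, hrμ, if_true]
    split_ifs <;> norm_num
  · have habove : ∀ x ∈ T, μ < x := fun x hx => lt_of_not_ge fun h =>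
      hbelow ⟨x, mem_filter.mpr ⟨hx, lt_of_le_of_ne h fun h' => hμ (h' ▸ hx)⟩⟩
    refine ⟨T.max' hne, max'_mem T hne, fun x hx => ?_⟩
    have hlt : x < T.max' hne :=
      lt_of_le_of_ne (le_max' T x (mem_of_mem_erase hx)) (ne_of_mem_erase hx)
    simp [stepSign, hlt.not_gt, habove x (mem_of_mem_erase hx), (habove _ (max'_mem T hne)).not_gt]

theorem mul_altSign_insert_erase {c : ℝ} (hr : r ∈ T) (hμ : μ ∉ T) (hc : c * c = 1)
    (hrμ : ∀ x ∈ T.erase r, stepSign r x * stepSign μ x = c * stepSign r μ)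
    (hx : x ∈ T.erase r) :
    c * stepSign r μ * altSign (insert μ (T.erase r)) x = altSign T x := by
  rw [altSign_insert_erase hr hμ]
  linear_combination (c * stepSign r μ * altSign T x) * hrμ x hx
    + (altSign T x * stepSign r μ * stepSign r μ) * hc
    + altSign T x * stepSign_mul_self (y := r) (x := μ)

theorem mul_altSign_insert_erase_self {c : ℝ} (hr : r ∈ T) (hμ : μ ∉ T) :
    c * stepSign r μ * altSign (insert μ (T.erase r)) μ = c * altSign T μ := by
  rw [altSign_insert_erase hr hμ, stepSign_self]
  linear_combination (c * altSign T μ) * stepSign_mul_self (y := r) (x := μ)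

theorem exists_mul_weightSum_insert_erase_lt (hT : ∀ y ∈ T, 0 < y) (hne : T.Nonempty)
    (hμ0 : 0 < μ) (hμ : μ ∉ T) (hdeg : p.degree < #T)
    (hval : ∀ x ∈ T, p.eval x = altSign T x * E) (hμE : E < |p.eval μ|) :
    ∃ r ∈ T, E * weightSum (insert μ (T.erase r)) < |p.eval 0| := by
  obtain ⟨c, hc, hcμ⟩ : ∃ c : ℝ, (c = 1 ∨ c = -1) ∧
      c * (altSign T μ * p.eval μ) = |p.eval μ| := by
    have h : |altSign T μ * p.eval μ| = |p.eval μ| := by rw [abs_mul, abs_altSign, one_mul]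
    rcases abs_choice (altSign T μ * p.eval μ) with h' | h'
    · exact ⟨1, .inl rfl, by rw [← h, h', one_mul]⟩
    · exact ⟨-1, .inr rfl, by rw [← h, h', neg_one_mul]⟩
  obtain ⟨r, hr, hrμ⟩ :
      ∃ r ∈ T, ∀ x ∈ T.erase r, stepSign r x * stepSign μ x = c * stepSign r μ := by
    rcases hc with rfl | rfl
    · simpa only [one_mul] using exists_stepSign_mul_stepSign_eq hne hμ
    · simpa only [neg_one_mul] using exists_stepSign_mul_stepSign_eq_neg hne hμ
  have hcc : c * c = 1 := by rcases hc with rfl | rfl <;> norm_num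
  have hstrict : E < c * stepSign r μ * (altSign (insert μ (T.erase r)) μ * p.eval μ) := by
    rwa [← mul_assoc, mul_altSign_insert_erase_self hr hμ, mul_assoc, hcμ]
  have hle : ∀ x ∈ insert μ (T.erase r),
      E ≤ c * stepSign r μ * (altSign (insert μ (T.erase r)) x * p.eval x) := by
    intro x hx
    rcases mem_insert.mp hx with rfl | hx
    · exact hstrict.le
    rw [← mul_assoc, mul_altSign_insert_erase hr hμ hcc hrμ hx, hval x (mem_of_mem_erase hx),
      ← mul_assoc, altSign_mul_self, one_mul]
  have hpos : ∀ y ∈ insert μ (T.erase r), 0 < y := by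
    intro y hy
    rcases mem_insert.mp hy with rfl | hy
    exacts [hμ0, hT y (mem_of_mem_erase hy)]
  have hcard : #(insert μ (T.erase r)) = #T := by
    rw [card_insert_of_notMem fun h => hμ (mem_of_mem_erase h), card_erase_add_one hr]
  have habs : |c * stepSign r μ| = 1 := by
    rw [abs_mul, abs_stepSign, mul_one]; rcases hc with rfl | rfl <;> norm_num
  refine ⟨r, hr, (mul_weightSum_lt hpos (hcard ▸ hdeg) hle
    ⟨μ, mem_insert_self μ _, hstrict⟩).trans_le ?_⟩
  calc c * stepSign r μ * p.eval 0 ≤ |c * stepSign r μ * p.eval 0| := le_abs_self _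
    _ = |p.eval 0| := by rw [abs_mul, habs, one_mul]

theorem abs_eval_le_inv_weightSum {S : Finset ℝ} (hS : ∀ y ∈ S, 0 < y) (hTS : T ⊆ S)
    (hne : T.Nonempty) (hmin : ∀ T' ⊆ S, #T' = #T → weightSum T ≤ weightSum T')
    (hdeg : p.degree < #T) (hp0 : p.eval 0 = 1)
    (hval : ∀ x ∈ T, p.eval x = altSign T x * (weightSum T)⁻¹) :
    ∀ μ ∈ S, |p.eval μ| ≤ (weightSum T)⁻¹ := by
  have hT : ∀ y ∈ T, 0 < y := fun y hy => hS y (hTS hy)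
  have hW := weightSum_pos hT hne
  intro μ hμS
  by_contra! hgt
  have hμT : μ ∉ T := fun h => by
    rw [hval μ h, abs_mul, abs_altSign, one_mul, abs_of_pos (inv_pos.mpr hW)] at hgt
    exact hgt.false
  obtain ⟨r, hr, hlt⟩ :=
    exists_mul_weightSum_insert_erase_lt hT hne (hS μ hμS) hμT hdeg hval hgt
  have hle := hmin (insert μ (T.erase r)) (insert_subset hμS ((erase_subset r T).trans hTS))
    (by rw [card_insert_of_notMem fun h => hμT (mem_of_mem_erase h), card_erase_add_one hr])
  rw [hp0, abs_one, inv_mul_lt_iff₀ hW, mul_one] at hlt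
  exact hlt.not_ge hle

noncomputable def extremalPoly (T : Finset ℝ) : ℝ[X] :=
  Lagrange.interpolate T id fun x => altSign T x * (weightSum T)⁻¹

theorem degree_extremalPoly_lt : (extremalPoly T).degree < #T :=
  Lagrange.degree_interpolate_lt _ Function.injective_id.injOn

theorem eval_extremalPoly (hx : x ∈ T) :
    (extremalPoly T).eval x = altSign T x * (weightSum T)⁻¹ :=
  Lagrange.eval_interpolate_at_node _ Function.injective_id.injOn hx

theorem eval_extremalPoly_zero (hT : ∀ y ∈ T, 0 < y) (hne : T.Nonempty) :
    (extremalPoly T).eval 0 = 1 := by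
  rw [eval_zero_eq_sum hT degree_extremalPoly_lt]
  calc ∑ x ∈ T, altSign T x * (extremalPoly T).eval x * nodeWeight T x
      = ∑ x ∈ T, (weightSum T)⁻¹ * nodeWeight T x := sum_congr rfl fun x hx => by
        rw [eval_extremalPoly hx]
        linear_combination
          ((weightSum T)⁻¹ * nodeWeight T x) * altSign_mul_self (T := T) (x := x)
    _ = 1 := by rw [← mul_sum, ← weightSum, inv_mul_cancel₀ (weightSum_pos hT hne).ne']

theorem inv_weightSum_le_iSup_abs_eval {ι : Type*} [Fintype ι] {lam : ι → ℝ}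
    (hT : ∀ y ∈ T, 0 < y) (hne : T.Nonempty) (hTS : T ⊆ univ.image lam)
    (hdeg : p.degree < #T) (hp0 : p.eval 0 = 1) :
    (weightSum T)⁻¹ ≤ ⨆ j, |p.eval (lam j)| := by
  have h := abs_eval_zero_le_mul_weightSum hT hdeg fun x hx => by
    obtain ⟨j, -, rfl⟩ := mem_image.mp (hTS hx)
    exact le_ciSup (Set.finite_range fun j => |p.eval (lam j)|).bddAbove j
  rw [hp0, abs_one] at h
  exact (inv_le_iff_one_le_mul₀ (weightSum_pos hT hne)).mpr h

theorem iSup_abs_eval_extremalPoly {ι : Type*} [Fintype ι] {lam : ι → ℝ}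
    (hlam : ∀ i, 0 < lam i) (hTS : T ⊆ univ.image lam) (hne : T.Nonempty)
    (hmin : ∀ T' ⊆ univ.image lam, #T' = #T → weightSum T ≤ weightSum T') :
    ⨆ j, |(extremalPoly T).eval (lam j)| = (weightSum T)⁻¹ := by
  have hS : ∀ y ∈ univ.image lam, 0 < y := by
    simpa only [mem_image, mem_univ, true_and, forall_exists_index, forall_apply_eq_imp_iff]
  have hT : ∀ y ∈ T, 0 < y := fun y hy => hS y (hTS hy)
  have hp0 := eval_extremalPoly_zero hT hne
  have : Nonempty ι := let ⟨_, hx⟩ := hne; ⟨(mem_image.mp (hTS hx)).choose⟩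
  refine le_antisymm (ciSup_le fun j => ?_)
    (inv_weightSum_le_iSup_abs_eval hT hne hTS degree_extremalPoly_lt hp0)
  exact abs_eval_le_inv_weightSum hS hTS hne hmin degree_extremalPoly_lt hp0
    (fun _ => eval_extremalPoly) (lam j) (mem_image_of_mem lam (mem_univ j))

theorem exists_isLeast_iSup_abs_eval {ι : Type*} [Fintype ι] (lam : ι → ℝ)
    (hlam : ∀ i, 0 < lam i) {k : ℕ} (hk : k + 1 ≤ #(univ.image lam)) :
    ∃ T ⊆ univ.image lam, #T = k + 1 ∧
      IsLeast
        {t | ∃ p : ℝ[X], p.natDegree ≤ k ∧ p.eval 0 = 1 ∧ t = ⨆ j, |p.eval (lam j)|}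
        (weightSum T)⁻¹ := by
  obtain ⟨T, hT, hmin⟩ := exists_min_image (powersetCard (k + 1) (univ.image lam)) weightSum
    (powersetCard_nonempty.mpr hk)
  obtain ⟨hTS, hTcard⟩ := mem_powersetCard.mp hT
  have hTpos : ∀ y ∈ T, 0 < y := fun y hy => by
    obtain ⟨j, -, rfl⟩ := mem_image.mp (hTS hy)
    exact hlam j
  have hne : T.Nonempty := card_pos.mp (by omega)
  refine ⟨T, hTS, hTcard, ⟨extremalPoly T, ?_, eval_extremalPoly_zero hTpos hne, ?_⟩, ?_⟩
  · have hp : extremalPoly T ≠ 0 := fun h => by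
      simpa [h] using eval_extremalPoly_zero hTpos hne
    have := (natDegree_lt_iff_degree_lt hp).mpr (hTcard ▸ degree_extremalPoly_lt)
    omega
  · exact (iSup_abs_eval_extremalPoly hlam hTS hne fun T' hT' hcard =>
      hmin T' (mem_powersetCard.mpr ⟨hT', hcard.trans hTcard⟩)).symm
  · rintro t ⟨q, hq, hq0, rfl⟩
    exact inv_weightSum_le_iSup_abs_eval hTpos hne hTS
      (degree_le_natDegree.trans_lt (hTcard ▸ WithBot.coe_lt_coe.mpr (Nat.lt_succ_of_le hq))) hq0

theorem sum_prod_erase_eq_weightSum {ι : Type*} [Fintype ι] [DecidableEq ι] {f : ι → ℝ}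
    (hf : Function.Injective f) :
    ∑ i, ∏ j ∈ univ.erase i, |f j| / |f j - f i| = weightSum (univ.image f) := by
  rw [weightSum, sum_image fun a _ b _ h => hf h]
  refine sum_congr rfl fun i _ => ?_
  rw [nodeWeight, ← image_erase hf, prod_image fun a _ b _ h => hf h]

theorem natDegree_minpoly_le_card_image {ι : Type*} [Fintype ι] (lam : ι → ℝ) :
    (minpoly ℝ lam).natDegree ≤ #(univ.image lam) := by
  have hroot : aeval lam (∏ μ ∈ univ.image lam, (X - C μ)) = 0 := by
    funext i
    rw [aeval_pi_apply₂, Pi.zero_apply, aeval_def, eval₂_finsetProd]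
    exact prod_eq_zero (mem_image_of_mem lam (mem_univ i)) (by simp)
  have hmonic : (∏ μ ∈ univ.image lam, (X - C μ)).Monic :=
    monic_prod_of_monic _ _ fun μ _ => monic_X_sub_C μ
  calc (minpoly ℝ lam).natDegree ≤ (∏ μ ∈ univ.image lam, (X - C μ)).natDegree :=
        natDegree_le_of_dvd (minpoly.dvd ℝ lam hroot) hmonic.ne_zero
    _ = #(univ.image lam) := by
        rw [natDegree_prod_of_monic _ _ fun μ _ => monic_X_sub_C μ]
        simp

theorem minpoly_conj_diagonal {n : Type*} [Fintype n] [DecidableEq n] {Q : Matrix n n ℝ}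
    (hQ : Qᵀ * Q = 1) (lam : n → ℝ) :
    minpoly ℝ (Q * diagonal lam * Qᵀ) = minpoly ℝ lam := by
  rw [← minpoly.algHom_eq (diagonalAlgHom ℝ) (fun a b h => diagonal_injective h) lam]
  exact minpoly.algEquiv_eq
    (Unitary.conjStarAlgAut ℝ _ ⟨Q, mem_unitaryGroup_iff'.mpr hQ⟩).toAlgEquiv (diagonal lam)

theorem stmt_5 {N : ℕ} (A Q : Matrix (Fin N) (Fin N) ℝ) (lam : Fin N → ℝ)
    (hlam : ∀ i, 0 < lam i) (hQ : Qᵀ * Q = 1)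
    (hAQ : A = Q * Matrix.diagonal lam * Qᵀ)
    (k : ℕ) (hk1 : 1 ≤ k) (hk2 : k ≤ (minpoly ℝ A).natDegree - 1) :
    ∃ lh : Fin (k + 1) → ℝ, Function.Injective lh ∧ (∀ i, lh i ∈ Set.range lam) ∧
      sInf {t | ∃ p : Polynomial ℝ, p.natDegree ≤ k ∧ p.eval 0 = 1 ∧
          t = ⨆ j, |p.eval (lam j)|} =
        (∑ i : Fin (k + 1), ∏ j ∈ Finset.univ.erase i, |lh j| / |lh j - lh i|)⁻¹ := by
  have hk : k + 1 ≤ #(univ.image lam) := by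
    have := natDegree_minpoly_le_card_image lam
    rw [hAQ, minpoly_conj_diagonal hQ] at hk2
    omega
  obtain ⟨T, hTS, hTcard, hleast⟩ := exists_isLeast_iSup_abs_eval lam hlam hk
  have himage : univ.image (T.orderEmbOfFin hTcard) = T := by simp
  refine ⟨T.orderEmbOfFin hTcard, (T.orderEmbOfFin hTcard).injective, fun i => ?_, ?_⟩
  · simpa using hTS (T.orderEmbOfFin_mem hTcard i)
  · rw [hleast.csInf_eq, sum_prod_erase_eq_weightSum (T.orderEmbOfFin hTcard).injective,
      himage]
end

section
/- Let 0 < λ₁ ≤ λ₂ ≤ … ≤ λ_N be real numbers and set κ = λ_N/λ₁. Then for every k ≥ 0, the min over p ∈ P_k(0) of max over 1 ≤ i ≤ N of |p(λ_i)| is at most 2·((√κ − 1)/(√κ + 1))^k. -/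
/-!
Shift and scale the Chebyshev polynomial `T_k` so that `[a, b]` goes to `[-1, 1]`, and normalize
it to take the value `1` at `0`, which is sent to `c = (b + a) / (b - a) > 1`. On `[a, b]` the
result is bounded by `1 / T_k(c)`. Writing `c = (ρ + ρ⁻¹) / 2` with `ρ = (√κ - 1) / (√κ + 1)`,
one has `T_k(c) = (ρ ^ k + ρ⁻¹ ^ k) / 2 ≥ ρ⁻¹ ^ k / 2`. When `a = b`, `(1 - x / a) ^ k` vanishes
on `[a, b]`.
-/

open Polynomial Polynomial.Chebyshev

theorem Polynomial.Chebyshev.T_real_eval_half_add_inv {z : ℝ} (hz : 0 < z) (k : ℕ) :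
    (T ℝ k).eval ((z + z⁻¹) / 2) = (z ^ k + z⁻¹ ^ k) / 2 := by
  rw [← Real.cosh_log hz, T_real_cosh, Real.cosh_eq, Int.cast_natCast, ← mul_neg,
    ← Real.log_inv, Real.exp_nat_mul, Real.exp_nat_mul, Real.exp_log hz,
    Real.exp_log (inv_pos.mpr hz)]

theorem Polynomial.Chebyshev.inv_eval_T_real_half_add_inv_le {ρ : ℝ} (hρ : 0 < ρ) (k : ℕ) :
    ((T ℝ k).eval ((ρ + ρ⁻¹) / 2))⁻¹ ≤ 2 * ρ ^ k := by
  rw [T_real_eval_half_add_inv hρ]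
  calc ((ρ ^ k + ρ⁻¹ ^ k) / 2)⁻¹ ≤ (ρ⁻¹ ^ k / 2)⁻¹ := by
        gcongr
        linarith [pow_pos hρ k]
    _ = 2 * ρ ^ k := by rw [inv_div, inv_pow, div_inv_eq_mul]

theorem exists_eval_zero_eq_one_abs_eval_le_inv_eval_T {a b : ℝ} (ha : 0 < a) (hab : a < b)
    (k : ℕ) : ∃ p : ℝ[X], p.natDegree ≤ k ∧ p.eval 0 = 1 ∧
      ∀ x ∈ Set.Icc a b, |p.eval x| ≤ ((T ℝ k).eval ((b + a) / (b - a)))⁻¹ := by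
  have hba : 0 < b - a := sub_pos.mpr hab
  set M := (T ℝ k).eval ((b + a) / (b - a))
  have hM : 1 ≤ M := one_le_eval_T_real _ ((one_le_div hba).mpr (by linarith))
  set L : ℝ[X] := C ((b + a) / (b - a)) - C (2 / (b - a)) * X
  have hL : ∀ x, L.eval x = (b + a - 2 * x) / (b - a) := fun x => by
    simp only [L, eval_sub, eval_mul, eval_C, eval_X]; ring
  refine ⟨C M⁻¹ * (T ℝ k).comp L, ?_, ?_, fun x hx => ?_⟩
  · calc (C M⁻¹ * (T ℝ k).comp L).natDegree ≤ (T ℝ k).natDegree * L.natDegree :=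
          (natDegree_C_mul_le _ _).trans natDegree_comp_le
      _ ≤ k * 1 := by
          gcongr
          · simp [natDegree_T]
          · simp only [L]; compute_degree
      _ = k := mul_one k
  · simp only [eval_mul, eval_C, eval_comp, hL, mul_zero, sub_zero]
    exact inv_mul_cancel₀ (by positivity)
  · have hLx : |L.eval x| ≤ 1 := by
      rw [hL, abs_div, abs_of_pos hba, div_le_one hba, abs_le]
      constructor <;> linarith [hx.1, hx.2]
    rw [eval_mul, eval_C, eval_comp, abs_mul, abs_of_pos (by positivity)]
    exact mul_le_of_le_one_right (by positivity) (abs_eval_T_real_le_one _ hLx)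

theorem sq_add_one_div_sq_sub_one_eq {s : ℝ} (hs : 1 < s) :
    (s ^ 2 + 1) / (s ^ 2 - 1) = ((s - 1) / (s + 1) + ((s - 1) / (s + 1))⁻¹) / 2 := by
  have h1 : s - 1 ≠ 0 := by linarith
  have h2 : s + 1 ≠ 0 := by linarith
  have h3 : s ^ 2 - 1 ≠ 0 := by nlinarith
  field_simp
  ring

theorem exists_eval_zero_eq_one_abs_eval_le_two_mul_pow {a b : ℝ} (ha : 0 < a) (hab : a ≤ b)
    (k : ℕ) : ∃ p : ℝ[X], p.natDegree ≤ k ∧ p.eval 0 = 1 ∧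
      ∀ x ∈ Set.Icc a b, |p.eval x| ≤ 2 * ((√(b / a) - 1) / (√(b / a) + 1)) ^ k := by
  rcases hab.eq_or_lt with rfl | hab
  · refine ⟨(1 - C a⁻¹ * X) ^ k, ?_, by simp, fun x hx => ?_⟩
    · compute_degree!
    · obtain rfl : x = a := le_antisymm hx.2 hx.1
      simp only [div_self ha.ne', Real.sqrt_one, sub_self, zero_div, eval_pow, eval_sub, eval_one,
        eval_mul, eval_C, eval_X, inv_mul_cancel₀ ha.ne', abs_pow, abs_zero]
      exact le_mul_of_one_le_left (pow_nonneg le_rfl k) one_le_two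
  set s := √(b / a)
  have hs2 : s ^ 2 = b / a := Real.sq_sqrt (div_pos (ha.trans hab) ha).le
  have hs : 1 < s := Real.lt_sqrt_of_sq_lt (by rw [one_pow]; exact (one_lt_div ha).mpr hab)
  have hc : (b + a) / (b - a) = ((s - 1) / (s + 1) + ((s - 1) / (s + 1))⁻¹) / 2 := by
    rw [← sq_add_one_div_sq_sub_one_eq hs, hs2]
    field_simp
  obtain ⟨p, hdeg, h0, hp⟩ := exists_eval_zero_eq_one_abs_eval_le_inv_eval_T ha hab k
  refine ⟨p, hdeg, h0, fun x hx => (hp x hx).trans ?_⟩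
  rw [hc]
  exact inv_eval_T_real_half_add_inv_le (div_pos (by linarith) (by linarith)) k

theorem stmt_6 {N : ℕ} (lam : Fin (N + 1) → ℝ) (hpos : ∀ i, 0 < lam i)
    (hmono : Monotone lam) (k : ℕ) :
    sInf {t | ∃ p : Polynomial ℝ, p.natDegree ≤ k ∧ p.eval 0 = 1 ∧
        t = ⨆ i, |p.eval (lam i)|} ≤
      2 * ((Real.sqrt (lam (Fin.last N) / lam 0) - 1) /
        (Real.sqrt (lam (Fin.last N) / lam 0) + 1)) ^ k := by
  obtain ⟨p, hdeg, h0, hp⟩ :=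
    exists_eval_zero_eq_one_abs_eval_le_two_mul_pow (hpos 0) (hmono (Fin.zero_le _)) k
  have hbdd : BddBelow {t | ∃ p : Polynomial ℝ, p.natDegree ≤ k ∧ p.eval 0 = 1 ∧
      t = ⨆ i, |p.eval (lam i)|} :=
    ⟨0, by rintro t ⟨q, -, -, rfl⟩; exact Real.iSup_nonneg fun i => abs_nonneg _⟩
  refine (csInf_le hbdd ⟨p, hdeg, h0, rfl⟩).trans (ciSup_le fun i => hp _ ?_)
  exact ⟨hmono (Fin.zero_le i), hmono (Fin.le_last i)⟩
end

section
/- (Meurant, 2020) Let f₀, f₁, …, f_{N−1} be arbitrary positive real numbers and let g₀ > g₁ > … > g_{N−1} > 0 be strictly decreasing positive real numbers. Then there exist a real symmetric positive definite matrix A ∈ ℝ^{N×N} and a right-hand side b ∈ ℝ^N such that, with x = A⁻¹b, x₀ = 0, and x_k the unique minimizer of ‖x − z‖_A over z ∈ K_k(A,b), the CG residual norms and error norms satisfy ‖b − A x_k‖₂ = f_k and ‖x − x_k‖_A = g_k for k = 0, 1, …, N−1, and x_N = x. -/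
open Matrix Polynomial

/-- The Euclidean norm of a vector. -/
noncomputable def enorm {N : ℕ} (v : Fin N → ℝ) : ℝ :=
  Real.sqrt (v ⬝ᵥ v)

/-!
Take the residuals to be `r_k = f_k e_k`, so `b = r_0`, and put `g_N := 0`. Let
`M = S⁻¹ (I - J) D` be upper bidiagonal, with `D = diag f`, `J` the shift `(Jv)_m = v_{m+1}` and
`S = diag √(g_m² - g_{m+1}²)`, and let `A = Mᵀ M`. The vectors `x_k` with entries
`(g_i² - g_k²) / f_i` for `i < k` (and `0` otherwise) satisfy `M x_k = √(g_m² - g_{m+1}²)·[m < k]`,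
and pairing with any `w` telescopes to `A x_k = r_0 - r_k`; for `k ≥ N` this reads `A x_k = b`.
Since `A` is tridiagonal, `K_k(A, b) ⊆ span {e_0, …, e_{k-1}}`, and conversely
`e_k ∈ span {b, A x_k}` gives equality. The residual `r_k` is orthogonal to that span, which is
the Galerkin condition characterising the CG iterate. Finally
`‖x - x_k‖_A² = (x - x_k)ᵀ r_k = f_k (x_N)_k = g_k²`.
-/

namespace CGRealization

variable {N : ℕ}

def zeroExtend (v : Fin N → ℝ) (k : ℕ) : ℝ := if h : k < N then v ⟨k, h⟩ else 0

lemma zeroExtend_val (v : Fin N → ℝ) (i : Fin N) : zeroExtend v i = v i := dif_pos i.2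

lemma zeroExtend_of_le (v : Fin N → ℝ) {k : ℕ} (hk : N ≤ k) : zeroExtend v k = 0 :=
  dif_neg (not_lt.2 hk)

lemma sum_ite_lt_eq_sum_range (G : ℕ → ℝ) (hG : ∀ m, N ≤ m → G m = 0) (k : ℕ) :
    ∑ m : Fin N, (if (m : ℕ) < k then G m else 0) = ∑ m ∈ Finset.range k, G m := by
  rw [Fin.sum_univ_eq_sum_range (fun m => if m < k then G m else 0), ← Finset.sum_filter]
  refine Finset.sum_subset (fun m => by simp +contextual) fun m hmk hm => hG m ?_
  simp_all

def firstCoords (N k : ℕ) : Submodule ℝ (Fin N → ℝ) :=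
  Submodule.pi {i | k ≤ (i : ℕ)} fun _ => ⊥

lemma mem_firstCoords {k : ℕ} {v : Fin N → ℝ} :
    v ∈ firstCoords N k ↔ ∀ i : Fin N, k ≤ (i : ℕ) → v i = 0 := by
  simp [firstCoords, Submodule.mem_pi]

lemma firstCoords_mono : Monotone (firstCoords N) := fun _ _ hkl _ hv =>
  mem_firstCoords.2 fun i hi => mem_firstCoords.1 hv i (hkl.trans hi)

lemma zeroExtend_of_mem_firstCoords {k j : ℕ} {v : Fin N → ℝ} (hv : v ∈ firstCoords N k)
    (hj : k ≤ j) : zeroExtend v j = 0 := by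
  unfold zeroExtend
  split_ifs
  · exact mem_firstCoords.1 hv _ hj
  · rfl

lemma mulVec_mem_firstCoords {B : Matrix (Fin N) (Fin N) ℝ} {p k : ℕ}
    (hB : ∀ i j : Fin N, (j : ℕ) + p < i → B i j = 0) {v : Fin N → ℝ}
    (hv : v ∈ firstCoords N k) : B *ᵥ v ∈ firstCoords N (k + p) := by
  refine mem_firstCoords.2 fun i hi => ?_
  refine (Finset.sum_eq_zero fun j _ => ?_ : ∑ j, B i j * v j = 0)
  by_cases hj : k ≤ (j : ℕ)
  · rw [mem_firstCoords.1 hv j hj, mul_zero]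
  · rw [hB i j (by omega), zero_mul]

section Galerkin

variable {A : Matrix (Fin N) (Fin N) ℝ}

lemma dotProduct_mulVec_add_of_orthogonal (hA : A.IsHermitian) {u v : Fin N → ℝ}
    (h : (A *ᵥ u) ⬝ᵥ v = 0) :
    (u + v) ⬝ᵥ A *ᵥ (u + v) = u ⬝ᵥ A *ᵥ u + v ⬝ᵥ A *ᵥ v := by
  have huv : u ⬝ᵥ A *ᵥ v = 0 := by
    rw [dotProduct_mulVec, ← hA.eq, vecMul_conjTranspose, star_trivial, star_trivial]
    exact h
  have hvu : v ⬝ᵥ A *ᵥ u = 0 := by rw [dotProduct_comm]; exact h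
  simp only [mulVec_add, dotProduct_add, add_dotProduct, huv, hvu]
  ring

lemma Anorm_inv_mulVec_sub_lt_of_orthogonal (hA : A.PosDef) {b y w : Fin N → ℝ}
    (horth : (b - A *ᵥ y) ⬝ᵥ (y - w) = 0) (hne : w ≠ y) :
    Anorm A (A⁻¹ *ᵥ b - y) < Anorm A (A⁻¹ *ᵥ b - w) := by
  let := hA.isUnit.invertible
  have hres : A *ᵥ (A⁻¹ *ᵥ b - y) = b - A *ᵥ y := by
    rw [mulVec_sub, mulVec_mulVec, mul_inv_of_invertible, one_mulVec]
  have hsplit := dotProduct_mulVec_add_of_orthogonal hA.isHermitian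
    (u := A⁻¹ *ᵥ b - y) (v := y - w) (hres ▸ horth)
  rw [sub_add_sub_cancel] at hsplit
  have hpos : 0 < (y - w) ⬝ᵥ A *ᵥ (y - w) := by
    simpa using hA.dotProduct_mulVec_pos (sub_ne_zero.2 hne.symm)
  have hnonneg : 0 ≤ (A⁻¹ *ᵥ b - y) ⬝ᵥ A *ᵥ (A⁻¹ *ᵥ b - y) := by
    simpa using hA.posSemidef.dotProduct_mulVec_nonneg (A⁻¹ *ᵥ b - y)
  rw [Anorm, Anorm, hsplit]
  exact Real.sqrt_lt_sqrt hnonneg (lt_add_of_pos_right _ hpos)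

lemma Anorm_sub_le_and_unique_of_residual_orthogonal (hA : A.PosDef)
    {K : Submodule ℝ (Fin N → ℝ)} {b y : Fin N → ℝ} (hy : y ∈ K)
    (horth : ∀ w ∈ K, (b - A *ᵥ y) ⬝ᵥ w = 0) :
    (∀ w ∈ K, Anorm A (A⁻¹ *ᵥ b - y) ≤ Anorm A (A⁻¹ *ᵥ b - w)) ∧
      (∀ w ∈ K, Anorm A (A⁻¹ *ᵥ b - w) ≤ Anorm A (A⁻¹ *ᵥ b - y) → w = y) := by
  have hlt : ∀ w ∈ K, w ≠ y → Anorm A (A⁻¹ *ᵥ b - y) < Anorm A (A⁻¹ *ᵥ b - w) :=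
    fun w hw hne => Anorm_inv_mulVec_sub_lt_of_orthogonal hA (horth _ (K.sub_mem hy hw)) hne
  refine ⟨fun w hw => ?_, fun w hw hle => ?_⟩
  · rcases eq_or_ne w y with rfl | hne
    · exact le_rfl
    · exact (hlt w hw hne).le
  · by_contra hne
    exact (hlt w hw hne).not_ge hle

end Galerkin

section Krylov

variable {A : Matrix (Fin N) (Fin N) ℝ} {b : Fin N → ℝ}

lemma krylov_mono : Monotone (krylov A b) := fun _ _ hkl =>
  Submodule.span_mono fun _ ⟨i, hi, hv⟩ => ⟨i, hi.trans_le hkl, hv⟩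

lemma pow_mulVec_mem_krylov {i k : ℕ} (hi : i < k) : (A ^ i) *ᵥ b ∈ krylov A b k :=
  Submodule.subset_span ⟨i, hi, rfl⟩

lemma mulVec_mem_krylov_succ {k : ℕ} {v : Fin N → ℝ} (hv : v ∈ krylov A b k) :
    A *ᵥ v ∈ krylov A b (k + 1) := by
  refine Submodule.span_induction (p := fun v _ => A *ᵥ v ∈ krylov A b (k + 1)) ?_ ?_ ?_ ?_ hv
  · rintro _ ⟨i, hi, rfl⟩
    rw [mulVec_mulVec, ← pow_succ']
    exact pow_mulVec_mem_krylov (by omega)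
  · simp
  · intro u w _ _ hu hw
    simpa [mulVec_add] using add_mem hu hw
  · intro c u _ hu
    simpa [mulVec_smul] using Submodule.smul_mem _ c hu

lemma krylov_le_of_mulVec_mem {E : ℕ → Submodule ℝ (Fin N → ℝ)} (hE : Monotone E)
    (hb : b ∈ E 1) (hA : ∀ k, ∀ v ∈ E k, A *ᵥ v ∈ E (k + 1)) (k : ℕ) : krylov A b k ≤ E k := by
  have hpow : ∀ i, (A ^ i) *ᵥ b ∈ E (i + 1) := by
    intro i
    induction i with
    | zero => simpa using hb
    | succ i ih =>
      rw [pow_succ', ← mulVec_mulVec]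
      exact hA _ _ ih
  rw [krylov, Submodule.span_le]
  rintro _ ⟨i, hi, rfl⟩
  exact hE (by omega : i + 1 ≤ k) (hpow i)

lemma firstCoords_le_krylov (y : ℕ → Fin N → ℝ) (hy : ∀ k, y k ∈ firstCoords N k)
    (hres : ∀ k (hk : k < N), ∃ c ≠ 0, b - A *ᵥ y k = Pi.single ⟨k, hk⟩ c) (k : ℕ) :
    firstCoords N k ≤ krylov A b k := by
  induction k with
  | zero =>
    intro v hv
    rw [show v = 0 from funext fun i => mem_firstCoords.1 hv i (Nat.zero_le _)]
    exact zero_mem _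
  | succ k ih =>
    intro v hv
    by_cases hk : k < N
    · obtain ⟨c, hc, hck⟩ := hres k hk
      have he : Pi.single ⟨k, hk⟩ c ∈ krylov A b (k + 1) := by
        rw [← hck]
        exact sub_mem (by simpa using pow_mulVec_mem_krylov (A := A) (b := b) k.succ_pos)
          (mulVec_mem_krylov_succ (ih (hy k)))
      have hlow : v - (v ⟨k, hk⟩ / c) • Pi.single ⟨k, hk⟩ c ∈ firstCoords N k := by
        refine mem_firstCoords.2 fun i hi => ?_
        rcases eq_or_ne i ⟨k, hk⟩ with rfl | hik
        · simp [hc]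
        · have hik' : k + 1 ≤ (i : ℕ) := by
            have : (i : ℕ) ≠ k := fun h => hik (Fin.ext h)
            omega
          simp [mem_firstCoords.1 hv i hik', hik]
      rw [← sub_add_cancel v ((v ⟨k, hk⟩ / c) • Pi.single ⟨k, hk⟩ c)]
      exact add_mem (krylov_mono k.le_succ (ih hlow)) (Submodule.smul_mem _ _ he)
    · exact krylov_mono k.le_succ (ih (mem_firstCoords.2 fun i _ => by omega))

end Krylov

section Construction

variable (f g : Fin N → ℝ)

def sqGap (m : ℕ) : ℝ := zeroExtend (g ^ 2) m - zeroExtend (g ^ 2) (m + 1)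

noncomputable def bidiagLin : (Fin N → ℝ) →ₗ[ℝ] (Fin N → ℝ) where
  toFun v m := (zeroExtend (f * v) m - zeroExtend (f * v) (m + 1)) / √(sqGap g m)
  map_add' v w := by
    ext m
    simp only [zeroExtend, Pi.mul_apply, Pi.add_apply]
    split_ifs <;> ring
  map_smul' c v := by
    ext m
    simp only [zeroExtend, Pi.mul_apply, Pi.smul_apply, smul_eq_mul, RingHom.id_apply]
    split_ifs <;> ring

noncomputable def bidiag : Matrix (Fin N) (Fin N) ℝ := LinearMap.toMatrix' (bidiagLin f g)

noncomputable def cgMatrix : Matrix (Fin N) (Fin N) ℝ := (bidiag f g)ᴴ * bidiag f g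

def residual (k : ℕ) : Fin N → ℝ := if h : k < N then Pi.single ⟨k, h⟩ (f ⟨k, h⟩) else 0

noncomputable def cgIterate (k : ℕ) : Fin N → ℝ := fun i =>
  if (i : ℕ) < k then (zeroExtend (g ^ 2) i - zeroExtend (g ^ 2) k) / f i else 0

variable {f g}

lemma sqGap_pos (hg : ∀ i, 0 < g i) (hganti : StrictAnti g) {m : ℕ} (hm : m < N) :
    0 < sqGap g m := by
  rw [sqGap, zeroExtend, dif_pos hm, Pi.pow_apply]
  by_cases hm' : m + 1 < N
  · rw [zeroExtend, dif_pos hm', Pi.pow_apply, sub_pos]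
    exact pow_lt_pow_left₀ (hganti (Fin.mk_lt_mk.2 m.lt_succ_self)) (hg _).le two_ne_zero
  · rw [zeroExtend_of_le _ (not_lt.1 hm'), sub_zero]
    exact pow_pos (hg _) 2

lemma bidiag_mulVec (v : Fin N → ℝ) : bidiag f g *ᵥ v = bidiagLin f g v :=
  LinearMap.toMatrix'_mulVec _ v

lemma bidiag_apply_eq_zero {i j : Fin N} (h₁ : j ≠ i) (h₂ : (j : ℕ) ≠ i + 1) :
    bidiag f g i j = 0 := by
  have hzero : ∀ m : ℕ, m ≠ j → zeroExtend (f * Pi.single j 1) m = 0 := by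
    intro m hm
    unfold zeroExtend
    split_ifs
    · simp [Fin.ext_iff, Ne.symm hm]
    · rfl
  rw [bidiag, LinearMap.toMatrix'_apply]
  simp only [bidiagLin, LinearMap.coe_mk, AddHom.coe_mk]
  rw [hzero i (fun h => h₁ (Fin.ext h.symm)), hzero (i + 1) (Ne.symm h₂), sub_zero, zero_div]

lemma cgMatrix_mulVec_mem_firstCoords {k : ℕ} {v : Fin N → ℝ} (hv : v ∈ firstCoords N k) :
    cgMatrix f g *ᵥ v ∈ firstCoords N (k + 1) := by
  rw [cgMatrix, ← mulVec_mulVec]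
  refine mulVec_mem_firstCoords (fun i j hij => ?_) (mulVec_mem_firstCoords (p := 0) ?_ hv)
  · rw [conjTranspose_apply, bidiag_apply_eq_zero (by rintro rfl; omega) (by omega), star_zero]
  · intro i j hij
    exact bidiag_apply_eq_zero (by rintro rfl; omega) (by omega)

lemma dotProduct_cgMatrix_mulVec (w v : Fin N → ℝ) :
    w ⬝ᵥ cgMatrix f g *ᵥ v = bidiagLin f g w ⬝ᵥ bidiagLin f g v := by
  rw [cgMatrix, ← mulVec_mulVec, dotProduct_mulVec, vecMul_conjTranspose, star_trivial,
    star_trivial, bidiag_mulVec, bidiag_mulVec]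

lemma bidiagLin_injective (hf : ∀ i, f i ≠ 0) (hgap : ∀ m < N, 0 < sqGap g m) :
    Function.Injective (bidiagLin f g) := by
  refine (injective_iff_map_eq_zero _).2 fun v hv => ?_
  -- `bidiagLin f g v = 0` says that `zeroExtend (f * v)` is constant; it vanishes from `N` on.
  have hstep : ∀ m, zeroExtend (f * v) (m + 1) = zeroExtend (f * v) m := by
    intro m
    by_cases hm : m < N
    · have h := congrFun hv ⟨m, hm⟩
      simp only [bidiagLin, LinearMap.coe_mk, AddHom.coe_mk, Pi.zero_apply, div_eq_zero_iff,
        Real.sqrt_eq_zero', not_le.2 (hgap m hm), or_false, sub_eq_zero] at h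
      exact h.symm
    · rw [zeroExtend_of_le _ (not_lt.1 hm), zeroExtend_of_le _ (by omega)]
  have hconst : ∀ m, zeroExtend (f * v) m = zeroExtend (f * v) 0 := fun m => by
    induction m with
    | zero => rfl
    | succ m ih => rw [hstep, ih]
  funext i
  have h : (f * v) i = 0 := by
    rw [← zeroExtend_val (f * v), hconst, ← hconst N, zeroExtend_of_le _ le_rfl]
  exact (mul_eq_zero.1 h).resolve_left (hf i)

lemma cgMatrix_posDef (hf : ∀ i, f i ≠ 0) (hgap : ∀ m < N, 0 < sqGap g m) :
    (cgMatrix f g).PosDef := by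
  refine PosDef.conjTranspose_mul_self _ ?_
  simpa only [mulVec, ← funext bidiag_mulVec] using bidiagLin_injective hf hgap

lemma residual_of_le {k : ℕ} (hk : N ≤ k) : residual f k = 0 := dif_neg (not_lt.2 hk)

lemma residual_mem_firstCoords (k : ℕ) : residual f k ∈ firstCoords N (k + 1) := by
  refine mem_firstCoords.2 fun i hi => ?_
  unfold residual
  split_ifs
  · exact Pi.single_eq_of_ne (fun h => by subst h; simp at hi) _
  · rfl

lemma dotProduct_residual (w : Fin N → ℝ) (k : ℕ) :
    w ⬝ᵥ residual f k = zeroExtend (f * w) k := by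
  unfold residual zeroExtend
  split_ifs
  · rw [dotProduct_single, Pi.mul_apply, mul_comm]
  · exact dotProduct_zero w

lemma dotProduct_residual_eq_zero {k : ℕ} {w : Fin N → ℝ} (hw : w ∈ firstCoords N k) :
    w ⬝ᵥ residual f k = 0 := by
  refine (dotProduct_residual w k).trans (zeroExtend_of_mem_firstCoords ?_ le_rfl)
  exact mem_firstCoords.2 fun i hi => by rw [Pi.mul_apply, mem_firstCoords.1 hw i hi, mul_zero]

lemma enorm_residual (hf : ∀ i, 0 < f i) (k : Fin N) : _root_.enorm (residual f k) = f k := by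
  simp [_root_.enorm, residual, Real.sqrt_mul_self (hf k).le]

lemma cgIterate_mem_firstCoords (k : ℕ) : cgIterate f g k ∈ firstCoords N k :=
  mem_firstCoords.2 fun _ hi => if_neg (not_lt.2 hi)

lemma zeroExtend_mul_cgIterate (hf : ∀ i, f i ≠ 0) (k j : ℕ) :
    zeroExtend (f * cgIterate f g k) j =
      if j < k then zeroExtend (g ^ 2) j - zeroExtend (g ^ 2) k else 0 := by
  by_cases hj : j < N
  · rw [zeroExtend, dif_pos hj, Pi.mul_apply]
    by_cases hjk : j < k
    · simp only [cgIterate, hjk, if_true]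
      field_simp [hf]
    · simp [cgIterate, hjk]
  · rw [zeroExtend_of_le _ (not_lt.1 hj), zeroExtend_of_le _ (not_lt.1 hj)]
    split_ifs
    · rw [zeroExtend_of_le _ (by omega), sub_zero]
    · rfl

lemma bidiagLin_cgIterate (hf : ∀ i, f i ≠ 0) (k : ℕ) :
    bidiagLin f g (cgIterate f g k) =
      fun m : Fin N => if (m : ℕ) < k then √(sqGap g m) else 0 := by
  ext m
  simp only [bidiagLin, LinearMap.coe_mk, AddHom.coe_mk, zeroExtend_mul_cgIterate hf]
  split_ifs
  · convert Real.div_sqrt (x := sqGap g m) using 2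
    rw [sqGap]
    ring
  · convert Real.div_sqrt (x := sqGap g m) using 2
    rw [sqGap, show k = m + 1 by omega]
    ring
  · omega
  · simp

lemma cgMatrix_mulVec_cgIterate (hf : ∀ i, f i ≠ 0) (hgap : ∀ m < N, 0 < sqGap g m) (k : ℕ) :
    cgMatrix f g *ᵥ cgIterate f g k = residual f 0 - residual f k := by
  refine dotProduct_eq _ _ fun w => ?_
  rw [sub_dotProduct, dotProduct_comm _ w, dotProduct_comm _ w, dotProduct_comm _ w,
    dotProduct_residual, dotProduct_residual, dotProduct_cgMatrix_mulVec,
    bidiagLin_cgIterate hf, dotProduct, ← Finset.sum_range_sub',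
    ← sum_ite_lt_eq_sum_range _ (fun m hm => by
      rw [zeroExtend_of_le _ hm, zeroExtend_of_le _ (by omega), sub_zero]) k]
  refine Finset.sum_congr rfl fun m _ => ?_
  split_ifs
  · exact div_mul_cancel₀ _ (Real.sqrt_pos.2 (hgap m m.2)).ne'
  · exact mul_zero _

lemma residual_zero_sub_cgMatrix_mulVec_cgIterate (hf : ∀ i, f i ≠ 0)
    (hgap : ∀ m < N, 0 < sqGap g m) (k : ℕ) :
    residual f 0 - cgMatrix f g *ᵥ cgIterate f g k = residual f k := by
  rw [cgMatrix_mulVec_cgIterate hf hgap, sub_sub_cancel]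

lemma cgMatrix_inv_mulVec_residual_zero (hf : ∀ i, f i ≠ 0) (hgap : ∀ m < N, 0 < sqGap g m) :
    (cgMatrix f g)⁻¹ *ᵥ residual f 0 = cgIterate f g N := by
  let := (cgMatrix_posDef hf hgap).isUnit.invertible
  refine inv_mulVec_eq_vec ?_
  rw [cgMatrix_mulVec_cgIterate hf hgap, residual_of_le le_rfl, sub_zero]

lemma krylov_cgMatrix_residual_zero (hf : ∀ i, f i ≠ 0) (hgap : ∀ m < N, 0 < sqGap g m)
    (k : ℕ) : krylov (cgMatrix f g) (residual f 0) k = firstCoords N k := by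
  refine le_antisymm (krylov_le_of_mulVec_mem firstCoords_mono (residual_mem_firstCoords 0)
    (fun _ _ => cgMatrix_mulVec_mem_firstCoords) k) (firstCoords_le_krylov (cgIterate f g)
    cgIterate_mem_firstCoords (fun j hj => ⟨f ⟨j, hj⟩, hf _, ?_⟩) k)
  rw [residual_zero_sub_cgMatrix_mulVec_cgIterate hf hgap, residual, dif_pos hj]

lemma Anorm_cgIterate_sub (hf : ∀ i, f i ≠ 0) (hgap : ∀ m < N, 0 < sqGap g m) {k : Fin N}
    (hgk : 0 ≤ g k) : Anorm (cgMatrix f g) (cgIterate f g N - cgIterate f g k) = g k := by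
  rw [Anorm, mulVec_sub, cgMatrix_mulVec_cgIterate hf hgap, cgMatrix_mulVec_cgIterate hf hgap,
    residual_of_le le_rfl, sub_zero, sub_sub_cancel, dotProduct_residual, zeroExtend_val]
  simp only [Pi.mul_apply, Pi.sub_apply, cgIterate, Fin.is_lt, ↓reduceIte, zeroExtend,
    ↓reduceDIte, Fin.eta, Pi.pow_apply, lt_self_iff_false, sub_zero]
  rw [mul_div_cancel₀ _ (hf k), Real.sqrt_sq hgk]

end Construction

end CGRealization

open CGRealization

theorem stmt_9_general {N : ℕ} (f g : Fin N → ℝ)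
    (hf : ∀ i, 0 < f i) (hg : ∀ i, 0 < g i) (hganti : StrictAnti g) :
    ∃ (A : Matrix (Fin N) (Fin N) ℝ) (b : Fin N → ℝ) (xs : ℕ → Fin N → ℝ),
      A.PosDef ∧
      (∀ k : ℕ, xs k ∈ krylov A b k ∧
        (∀ w ∈ krylov A b k, Anorm A (A⁻¹ *ᵥ b - xs k) ≤ Anorm A (A⁻¹ *ᵥ b - w)) ∧
        (∀ w ∈ krylov A b k,
          Anorm A (A⁻¹ *ᵥ b - w) ≤ Anorm A (A⁻¹ *ᵥ b - xs k) → w = xs k)) ∧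
      (∀ k : Fin N, _root_.enorm (b - A *ᵥ xs k) = f k) ∧
      (∀ k : Fin N, Anorm A (A⁻¹ *ᵥ b - xs k) = g k) ∧
      xs N = A⁻¹ *ᵥ b := by
  have hf₀ : ∀ i, f i ≠ 0 := fun i => (hf i).ne'
  have hgap : ∀ m < N, 0 < sqGap g m := fun m hm => sqGap_pos hg hganti hm
  have hA := cgMatrix_posDef hf₀ hgap
  have hres := residual_zero_sub_cgMatrix_mulVec_cgIterate hf₀ hgap
  have hx := cgMatrix_inv_mulVec_residual_zero hf₀ hgap
  refine ⟨cgMatrix f g, residual f 0, cgIterate f g, hA, fun k => ?_, fun k => ?_, fun k => ?_,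
    hx.symm⟩
  · rw [krylov_cgMatrix_residual_zero hf₀ hgap]
    refine ⟨cgIterate_mem_firstCoords k, Anorm_sub_le_and_unique_of_residual_orthogonal hA
      (cgIterate_mem_firstCoords k) fun w hw => ?_⟩
    rw [hres, dotProduct_comm]
    exact dotProduct_residual_eq_zero hw
  · rw [hres]
    exact enorm_residual hf k
  · rw [hx]
    exact Anorm_cgIterate_sub hf₀ hgap (hg k).le

theorem stmt_9 {N : ℕ} (hN : 0 < N) (f g : Fin N → ℝ)
    (hf : ∀ i, 0 < f i) (hg : ∀ i, 0 < g i) (hganti : StrictAnti g) :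
    ∃ (A : Matrix (Fin N) (Fin N) ℝ) (b : Fin N → ℝ) (xs : ℕ → Fin N → ℝ),
      A.PosDef ∧
      (∀ k : ℕ, xs k ∈ krylov A b k ∧
        (∀ w ∈ krylov A b k, Anorm A (A⁻¹ *ᵥ b - xs k) ≤ Anorm A (A⁻¹ *ᵥ b - w)) ∧
        (∀ w ∈ krylov A b k,
          Anorm A (A⁻¹ *ᵥ b - w) ≤ Anorm A (A⁻¹ *ᵥ b - xs k) → w = xs k)) ∧
      (∀ k : Fin N, _root_.enorm (b - A *ᵥ xs k) = f k) ∧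
      (∀ k : Fin N, Anorm A (A⁻¹ *ᵥ b - xs k) = g k) ∧
      xs N = A⁻¹ *ᵥ b :=
  stmt_9_general f g hf hg hganti
end

section
/- (Greenbaum–Strakoš) For every N ≥ 1 there exist a unitary matrix A ∈ ℂ^{N×N} and a unit vector b ∈ ℂ^N such that min over p ∈ P_k(0) of ‖p(A)b‖₂ = 1 for all k = 0, 1, …, N−1; i.e., GMRES can completely stagnate for N−1 steps even for a unitary (hence normal) matrix. -/
open Matrix Polynomial

/-- The Euclidean norm of a complex vector. -/
noncomputable def cenorm {N : ℕ} (v : Fin N → ℂ) : ℝ :=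
  Real.sqrt (∑ i, ‖v i‖ ^ 2)

/-!
Take for `A` the cyclic shift `e_i ↦ e_{i-1}` (a permutation matrix, hence unitary) and `b = e_0`.
Then `Aᵐ b` is a standard basis vector which is `e_0` only for `N ∣ m`, so for `deg p < N` the
`0`-th coordinate of `p(A) b` is `p(0) = 1`, giving `‖p(A) b‖ ≥ 1`; the constant `p = 1` attains it.
-/

lemma cenorm_eq_norm_toLp {N : ℕ} (v : Fin N → ℂ) :
    cenorm v = ‖(WithLp.toLp 2 v : EuclideanSpace ℂ (Fin N))‖ := by
  rw [EuclideanSpace.norm_eq]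
  rfl

lemma norm_apply_le_cenorm {N : ℕ} (v : Fin N → ℂ) (i : Fin N) : ‖v i‖ ≤ cenorm v := by
  rw [cenorm_eq_norm_toLp]
  exact PiLp.norm_apply_le (WithLp.toLp 2 v) i

lemma cenorm_single_one {N : ℕ} (i : Fin N) : cenorm (Pi.single i 1) = 1 := by
  rw [cenorm_eq_norm_toLp, PiLp.toLp_single, PiLp.norm_single, norm_one]

section PermMatrix

open Equiv

variable {n R : Type*} [DecidableEq n] [Fintype n]

lemma conjTranspose_permMatrix_mul_self [NonAssocSemiring R] [StarRing R] (σ : Perm n) :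
    (σ.permMatrix R)ᴴ * σ.permMatrix R = 1 := by
  rw [conjTranspose_permMatrix, ← permMatrix_mul, mul_inv_cancel, permMatrix_one]

lemma permMatrix_pow [Semiring R] (σ : Perm n) (m : ℕ) :
    σ.permMatrix R ^ m = (σ ^ m).permMatrix R := by
  simpa using (map_pow (permMatrixHom (n := n) (R := R)) σ⁻¹ m).symm

lemma permMatrix_pow_mulVec [CommRing R] (σ : Perm n) (m : ℕ) (v : n → R) :
    σ.permMatrix R ^ m *ᵥ v = v ∘ ⇑(σ ^ m) := by
  rw [permMatrix_pow, permMatrix_mulVec]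

lemma aeval_permMatrix_mulVec_single_self [CommRing R] (σ : Perm n) (i : n) {k : ℕ}
    (hσ : ∀ m, 0 < m → m ≤ k → (σ ^ m) i ≠ i) {p : R[X]} (hp : p.natDegree ≤ k) :
    (aeval (σ.permMatrix R) p *ᵥ Pi.single i 1) i = p.eval 0 := by
  rw [aeval_eq_sum_range, sum_mulVec, Finset.sum_apply, Finset.sum_eq_single 0]
  · simp [coeff_zero_eq_eval_zero]
  · intro m hm hm0
    rw [smul_mulVec, permMatrix_pow_mulVec, Pi.smul_apply, Function.comp_apply,
      Pi.single_apply, if_neg (hσ m (Nat.pos_of_ne_zero hm0) _), smul_zero]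
    exact (Nat.lt_succ_iff.mp (Finset.mem_range.mp hm)).trans hp
  · simp

end PermMatrix

lemma val_finRotate_pow_apply (n m : ℕ) (i : Fin (n + 1)) :
    ((finRotate (n + 1) ^ m) i : ℕ) = (i + m) % (n + 1) := by
  induction m with
  | zero => simp [Nat.mod_eq_of_lt i.isLt]
  | succ m ih =>
    rw [pow_succ', Equiv.Perm.mul_apply, finRotate_apply, Fin.val_add, ih, Fin.val_one',
      Nat.add_mod_mod, Nat.mod_add_mod, add_assoc]

lemma finRotate_pow_apply_zero_ne_zero {n m : ℕ} (h0 : 0 < m) (hm : m < n + 1) :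
    (finRotate (n + 1) ^ m) 0 ≠ 0 := by
  rw [ne_eq, Fin.ext_iff, val_finRotate_pow_apply]
  simp [Nat.mod_eq_of_lt hm, h0.ne']

theorem stmt_15 (N : ℕ) (hN : 0 < N) :
    ∃ (A : Matrix (Fin N) (Fin N) ℂ) (b : Fin N → ℂ),
      Aᴴ * A = 1 ∧ cenorm b = 1 ∧
      ∀ k : ℕ, k < N →
        sInf {t | ∃ p : Polynomial ℂ, p.natDegree ≤ k ∧ p.eval 0 = 1 ∧
          t = cenorm ((aeval A p) *ᵥ b)} = 1 := by
  obtain ⟨n, rfl⟩ := Nat.exists_eq_succ_of_ne_zero hN.ne'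
  set A := (finRotate (n + 1)).permMatrix ℂ
  refine ⟨A, Pi.single 0 1, conjTranspose_permMatrix_mul_self _, cenorm_single_one 0,
    fun k hk => IsLeast.csInf_eq ⟨⟨1, by simp, by simp,
      by rw [map_one, one_mulVec, cenorm_single_one]⟩, ?_⟩⟩
  rintro _ ⟨p, hpk, hp0, rfl⟩
  have hσ : ∀ m, 0 < m → m ≤ k → (finRotate (n + 1) ^ m) 0 ≠ 0 :=
    fun m h0 hmk => finRotate_pow_apply_zero_ne_zero h0 (hmk.trans_lt hk)
  calc (1 : ℝ) = ‖(aeval A p *ᵥ Pi.single 0 1) 0‖ := by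
        rw [aeval_permMatrix_mulVec_single_self _ _ hσ hpk, hp0, norm_one]
    _ ≤ cenorm _ := norm_apply_le_cenorm _ _
end

section
/- (Murphy–Golub–Wathen) Let A ∈ ℝ^{n×n} be nonsingular and B ∈ ℝ^{m×n} be such that the Schur complement S = BA⁻¹Bᵀ is nonsingular. Let 𝒜 be the (n+m)×(n+m) block matrix [[A, Bᵀ],[B, 0]] and let P be the block diagonal matrix [[A, 0],[0, S]]. Then T = P⁻¹𝒜 satisfies (T − I)(T² − T − I) = 0, equivalently T³ − 2T² + I = 0; in particular the minimal polynomial of T divides (z − 1)(z² − z − 1), so T has at most the three distinct eigenvalues 1, (1+√5)/2, and (1−√5)/2. -/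
/-!
Writing `P⁻¹𝒜 = [[I, U], [V, 0]]` with `U = A⁻¹Bᵀ` and `V = S⁻¹B`, the definition of the Schur
complement says exactly `VU = I`. Then `T² - T - I = [[UV - I, 0], [0, 0]]`, and multiplying by
`T - I = [[0, U], [V, -I]]` leaves only the block `V(UV - I) = VUV - V = 0`. Every point of the
spectrum is a root of `(z - 1)(z² - z - 1) = (z - 1)(z - φ)(z - ψ)`.
-/

open Matrix Polynomial

namespace Matrix

variable {R : Type*} {n m : Type*}

theorem fromBlocks_sub [Ring R] (A A' : Matrix n n R) (B B' : Matrix n m R)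
    (C C' : Matrix m n R) (D D' : Matrix m m R) :
    fromBlocks A B C D - fromBlocks A' B' C' D' =
      fromBlocks (A - A') (B - B') (C - C') (D - D') := by
  simp only [sub_eq_add_neg, fromBlocks_neg, fromBlocks_add]

variable [Fintype n] [Fintype m] [DecidableEq n] [DecidableEq m]

theorem fromBlocks_one_zero_sq_sub_self_sub_one [Ring R] {U : Matrix n m R}
    {V : Matrix m n R} (hVU : V * U = 1) :
    fromBlocks 1 U V 0 ^ 2 - fromBlocks 1 U V 0 - 1 = fromBlocks (U * V - 1) 0 0 0 := by
  rw [pow_two, fromBlocks_multiply, ← fromBlocks_one, fromBlocks_sub, fromBlocks_sub]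
  simp only [hVU, Matrix.mul_one, Matrix.one_mul, Matrix.mul_zero, Matrix.zero_mul, add_zero]
  congr 1 <;> abel

theorem fromBlocks_one_zero_sub_one_mul_sq_sub_self_sub_one [Ring R] {U : Matrix n m R}
    {V : Matrix m n R} (hVU : V * U = 1) :
    (fromBlocks 1 U V 0 - 1) * (fromBlocks 1 U V 0 ^ 2 - fromBlocks 1 U V 0 - 1) = 0 := by
  have hV : V * (U * V - 1) = 0 := by
    rw [Matrix.mul_sub, ← Matrix.mul_assoc, hVU, Matrix.one_mul, Matrix.mul_one, sub_self]
  rw [fromBlocks_one_zero_sq_sub_self_sub_one hVU, ← fromBlocks_one, fromBlocks_sub,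
    fromBlocks_multiply]
  simp [hV]

theorem inv_fromBlocks_diagonal_mul_fromBlocks_zero₂₂ [CommRing R] {A : Matrix n n R}
    {S : Matrix m m R} (hA : IsUnit A.det) (hS : IsUnit S.det) (C : Matrix n m R)
    (B : Matrix m n R) :
    (fromBlocks A 0 0 S)⁻¹ * fromBlocks A C B 0 = fromBlocks 1 (A⁻¹ * C) (S⁻¹ * B) 0 := by
  have hAS : IsUnit A ↔ IsUnit S := by
    simp only [isUnit_iff_isUnit_det, hA, hS]
  rw [inv_fromBlocks_zero₂₁_of_isUnit_iff A 0 S hAS, fromBlocks_multiply]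
  simp [nonsing_inv_mul A hA]

end Matrix

theorem spectrum_subset_setOf_isRoot {𝕜 A : Type*} [Field 𝕜] [Ring A] [Algebra 𝕜 A] {a : A}
    {p : 𝕜[X]} (hp : aeval a p = 0) : spectrum 𝕜 a ⊆ {z | p.IsRoot z} := by
  nontriviality A
  intro z hz
  simpa [hp, spectrum.zero_eq] using spectrum.subset_polynomial_aeval a p ⟨z, hz, rfl⟩

namespace Real

open goldenRatio

theorem sq_sub_self_sub_one_eq_mul (x : ℝ) : x ^ 2 - x - 1 = (x - φ) * (x - ψ) := by
  linear_combination x * goldenRatio_add_goldenConj - goldenRatio_mul_goldenConj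

theorem eq_one_or_goldenRatio_or_goldenConj {x : ℝ} (hx : (x - 1) * (x ^ 2 - x - 1) = 0) :
    x = 1 ∨ x = φ ∨ x = ψ := by
  simpa only [sq_sub_self_sub_one_eq_mul, mul_eq_zero, sub_eq_zero] using hx

end Real

theorem stmt_16 {n m : ℕ} (A : Matrix (Fin n) (Fin n) ℝ) (hA : IsUnit A.det)
    (B : Matrix (Fin m) (Fin n) ℝ)
    (S : Matrix (Fin m) (Fin m) ℝ) (hS : S = B * A⁻¹ * Bᵀ) (hSdet : IsUnit S.det) :
    ∀ T : Matrix (Fin n ⊕ Fin m) (Fin n ⊕ Fin m) ℝ,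
      T = (Matrix.fromBlocks A 0 0 S)⁻¹ * Matrix.fromBlocks A Bᵀ B 0 →
      (T - 1) * (T ^ 2 - T - 1) = 0 ∧
      T ^ 3 - 2 * T ^ 2 + 1 = 0 ∧
      minpoly ℝ T ∣ (Polynomial.X - 1) * (Polynomial.X ^ 2 - Polynomial.X - 1) ∧
      spectrum ℝ T ⊆ {1, (1 + Real.sqrt 5) / 2, (1 - Real.sqrt 5) / 2} := by
  intro T hT
  rw [inv_fromBlocks_diagonal_mul_fromBlocks_zero₂₂ hA hSdet] at hT
  have hVU : S⁻¹ * B * (A⁻¹ * Bᵀ) = 1 := by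
    rw [Matrix.mul_assoc, ← Matrix.mul_assoc B, ← hS, nonsing_inv_mul S hSdet]
  have hcubic : (T - 1) * (T ^ 2 - T - 1) = 0 :=
    hT ▸ fromBlocks_one_zero_sub_one_mul_sq_sub_self_sub_one hVU
  have haeval : aeval T ((X - 1) * (X ^ 2 - X - 1) : ℝ[X]) = 0 := by
    simpa using hcubic
  refine ⟨hcubic, ?_, minpoly.dvd ℝ T haeval, ?_⟩
  · rw [← hcubic]
    noncomm_ring
  · intro z hz
    have hroot : (z - 1) * (z ^ 2 - z - 1) = 0 := by
      simpa using spectrum_subset_setOf_isRoot haeval hz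
    exact Real.eq_one_or_goldenRatio_or_goldenConj hroot
end
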